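/- (Semiclassical correspondence of LEPs and HEPs.) Let H ∈ M_n(ℂ) be Hermitian, let Γ_μ ∈ M_n(ℂ) (μ in a finite set F), set H_eff = H − (i/2)Σ_μ Γ_μᴴΓ_μ, and let L be the Liouvillian L(ρ) = −i(H_eff ρ − ρ H_effᴴ) + Σ_μ Γ_μ ρ Γ_μᴴ. Suppose φ₀ ∈ ℂⁿ satisfies Γ_μ φ₀ = 0 for every μ ∈ F and H_eff φ₀ = h₀ φ₀, and let φ_m be any eigenvector of H_eff with H_eff φ_m = h_m φ_m. Then L(φ₀ φ_mᴴ) = −i(h₀ − conj(h_m)) · φ₀ φ_mᴴ and L(φ_m φ₀ᴴ) = −i(h_m − conj(h₀)) · φ_m φ₀ᴴ; i.e., the outer products of φ₀ with any eigenvector of the non-Hermitian Hamiltonian are exact eigenmatrices of the full Liouvillian with the eigenvalues predicted by H_eff. -/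
import Mathlib
open Matrix Complex

lemma aux_mul_vecMulVec {n : ℕ} (A : Matrix (Fin n) (Fin n) ℂ) (a b : Fin n → ℂ) :
    A * Matrix.vecMulVec a b = Matrix.vecMulVec (A.mulVec a) b := by
  ext i j
  simp [Matrix.mul_apply, Matrix.vecMulVec_apply, Matrix.mulVec, dotProduct,
    Finset.sum_mul, mul_assoc]

lemma aux_vecMulVec_mul {n : ℕ} (B : Matrix (Fin n) (Fin n) ℂ) (a b : Fin n → ℂ) :
    Matrix.vecMulVec a (star b) * Bᴴ = Matrix.vecMulVec a (star (B.mulVec b)) := by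
  ext i j
  simp only [Matrix.mul_apply, Matrix.vecMulVec_apply, Matrix.conjTranspose_apply,
    Matrix.mulVec, dotProduct, Pi.star_apply, star_sum, star_mul',
    Finset.mul_sum]
  exact Finset.sum_congr rfl fun k _ => by ring

theorem semiclassical_correspondence (n : ℕ)
    (H : Matrix (Fin n) (Fin n) ℂ) (hH : H.IsHermitian)
    (F : Type) [Fintype F] (Γ : F → Matrix (Fin n) (Fin n) ℂ)
    (Heff : Matrix (Fin n) (Fin n) ℂ)
    (hHeff : Heff = H - (Complex.I / 2) • ∑ μ : F, (Γ μ)ᴴ * Γ μ)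
    (L : Matrix (Fin n) (Fin n) ℂ → Matrix (Fin n) (Fin n) ℂ)
    (hLdef : ∀ ρ : Matrix (Fin n) (Fin n) ℂ,
      L ρ = (-Complex.I) • (Heff * ρ - ρ * Heffᴴ) + ∑ μ : F, Γ μ * ρ * (Γ μ)ᴴ)
    (φ0 φm : Fin n → ℂ) (h0 hm : ℂ)
    (hjump : ∀ μ : F, (Γ μ).mulVec φ0 = 0)
    (hφ0 : Heff.mulVec φ0 = h0 • φ0)
    (hφm : Heff.mulVec φm = hm • φm) :
    L (Matrix.vecMulVec φ0 (star φm))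
        = (-Complex.I * (h0 - (starRingEnd ℂ) hm))
            • Matrix.vecMulVec φ0 (star φm) ∧
    L (Matrix.vecMulVec φm (star φ0))
        = (-Complex.I * (hm - (starRingEnd ℂ) h0))
            • Matrix.vecMulVec φm (star φ0) := by
  have hz1 : ∀ μ : F, Γ μ * Matrix.vecMulVec φ0 (star φm) = 0 := by
    intro μ
    rw [aux_mul_vecMulVec, hjump μ]
    ext i j; simp [Matrix.vecMulVec_apply]
  have hz2 : ∀ μ : F, Matrix.vecMulVec φm (star φ0) * (Γ μ)ᴴ = 0 := by
    intro μ
    rw [aux_vecMulVec_mul, hjump μ]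
    ext i j; simp [Matrix.vecMulVec_apply]
  constructor
  · rw [hLdef, aux_mul_vecMulVec, aux_vecMulVec_mul, hφ0, hφm]
    have : ∑ μ : F, Γ μ * Matrix.vecMulVec φ0 (star φm) * (Γ μ)ᴴ = 0 := by
      apply Finset.sum_eq_zero; intro μ _; rw [hz1 μ, Matrix.zero_mul]
    rw [this, add_zero]
    ext i j
    simp [Matrix.vecMulVec_apply, Complex.conj_conj]
    ring
  · rw [hLdef, aux_mul_vecMulVec, aux_vecMulVec_mul, hφ0, hφm]
    have : ∑ μ : F, Γ μ * Matrix.vecMulVec φm (star φ0) * (Γ μ)ᴴ = 0 := by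
      apply Finset.sum_eq_zero; intro μ _; rw [mul_assoc, hz2 μ, Matrix.mul_zero]
    rw [this, add_zero]
    ext i j
    simp [Matrix.vecMulVec_apply, Complex.conj_conj]
    ring
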